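/- arXiv:1611.01192 — 6 statements merged into one kernel-verified Lean document; each statement's English description precedes it below -/
import Mathlib

section
/- There are only finitely many natural numbers n such that n! is a powerful number. -/
/-- The radical of a natural number: the product of its distinct prime factors. -/
def rad (n : ℕ) : ℕ := ∏ p ∈ n.primeFactors, p

/-- A natural number is powerful if every prime dividing it does so at least to the square. -/
def Powerful (n : ℕ) : Prop := ∀ p : ℕ, p.Prime → p ∣ n → p ^ 2 ∣ n

/-- The abc conjecture: for every ε > 0, there are only finitely many triples (a,b,c) of
positive integers with gcd(a,b) = 1, a + b = c, and rad(abc)^(1+ε) < c. -/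
def ABCConjecture : Prop :=
  ∀ ε : ℝ, 0 < ε →
    {t : ℕ × ℕ × ℕ | 0 < t.1 ∧ 0 < t.2.1 ∧ 0 < t.2.2 ∧
      Nat.gcd t.1 t.2.1 = 1 ∧ t.1 + t.2.1 = t.2.2 ∧
      (rad (t.1 * t.2.1 * t.2.2) : ℝ) ^ (1 + ε) < (t.2.2 : ℝ)}.Finite

theorem factorial_powerful_finite :
    {n : ℕ | Powerful (n.factorial)}.Finite := by
  apply Set.Finite.subset (Set.finite_Iio 5)
  intro n hn
  simp only [Set.mem_Iio]
  by_contra hge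
  push_neg at hge
  -- n ≥ 5; get a prime p with n/2 < p ≤ n by Bertrand
  obtain ⟨p, hp, hlt, hle⟩ := Nat.exists_prime_lt_and_le_two_mul (n / 2) (by omega)
  have hpn : p ≤ n := le_trans hle (by omega)
  have h2p : n < 2 * p := by omega
  have hp3 : 3 ≤ p := by
    rcases hp.two_le.lt_or_eq with h | h
    · omega
    · omega
  have hpsq : n < p ^ 2 := by nlinarith [hp.two_le]
  have hdvd : p ∣ n.factorial := Nat.dvd_factorial hp.pos hpn
  have hsq : p ^ 2 ∣ n.factorial := hn p hp hdvd
  rw [Nat.Prime.pow_dvd_factorial_iff hp (b := 2) (Nat.log_lt_of_lt_pow (by omega) hpsq)] at hsq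
  have : ∑ i ∈ Finset.Ico 1 2, n / p ^ i = n / p := by simp
  rw [this] at hsq
  have : n / p = 1 := by
    have h1 : 1 ≤ n / p := (Nat.one_le_div_iff hp.pos).mpr hpn
    have h2 : n / p < 2 := Nat.div_lt_of_lt_mul (by omega)
    omega
  omega
end

section
/- Assume the abc conjecture. Then for every fixed positive integer k, there are only finitely many natural numbers n such that n! + k is a powerful number. -/
lemma rad_pos (n : ℕ) : 0 < rad n :=
  Finset.prod_pos fun p hp => (Nat.prime_of_mem_primeFactors hp).pos

lemma rad_dvd_rad_of_dvd {a b : ℕ} (hb : b ≠ 0) (h : a ∣ b) : rad a ∣ rad b :=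
  Finset.prod_dvd_prod_of_subset _ _ _ (Nat.primeFactors_mono h hb)

lemma rad_mul_dvd (x y : ℕ) : rad (x * y) ∣ rad x * rad y := by
  rcases eq_or_ne x 0 with rfl | hx
  · simpa [rad] using Dvd.intro _ rfl
  rcases eq_or_ne y 0 with rfl | hy
  · simpa [rad] using Dvd.intro_left _ rfl
  unfold rad
  rw [Nat.primeFactors_mul hx hy]
  refine ⟨∏ p ∈ x.primeFactors ∩ y.primeFactors, p, ?_⟩
  exact Finset.prod_union_inter.symm

lemma rad_sq_dvd_of_powerful {m : ℕ} (hm : m ≠ 0) (h : Powerful m) : rad m ^ 2 ∣ m := by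
  have hself : ∏ p ∈ m.primeFactors, p ^ m.factorization p = m := by
    conv_rhs => rw [← Nat.factorization_prod_pow_eq_self hm]
    rfl
  have hd : ∏ p ∈ m.primeFactors, p ^ 2 ∣ ∏ p ∈ m.primeFactors, p ^ m.factorization p := by
    apply Finset.prod_dvd_prod_of_dvd
    intro p hp
    have pp := Nat.prime_of_mem_primeFactors hp
    exact pow_dvd_pow p ((Nat.Prime.pow_dvd_iff_le_factorization pp hm).mp
      (h p pp (Nat.dvd_of_mem_primeFactors hp)))
  rw [hself] at hd
  rw [rad, ← Finset.prod_pow]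
  exact hd

lemma rad_factorial_le (n : ℕ) : rad n.factorial ≤ 4 ^ n := by
  have hd : rad n.factorial ∣ primorial n := by
    apply Finset.prod_dvd_prod_of_subset
    intro p hp
    obtain ⟨pp, hdvd, -⟩ := Nat.mem_primeFactors.mp hp
    have : p ≤ n := (Nat.Prime.dvd_factorial pp).mp hdvd
    simp only [primorial, Finset.mem_filter, Finset.mem_range]
    exact ⟨by omega, pp⟩
  have hpos : 0 < primorial n :=
    Finset.prod_pos fun p hp => (Finset.mem_filter.mp hp).2.pos
  exact (Nat.le_of_dvd hpos hd).trans (primorial_le_4_pow n)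

theorem factorial_add_powerful_finite (habc : ABCConjecture) (k : ℕ) (hk : 0 < k) :
    {n : ℕ | Powerful (n.factorial + k)}.Finite := by
  obtain ⟨N0, hN0⟩ :=
    (Nat.eventually_mul_pow_lt_factorial_sub (4 * k ^ 3) 256 0).exists_forall_of_atTop
  set N := max N0 (k + 1) with hNdef
  set ε : ℝ := 1/3 with hε
  have hεpos : (0 : ℝ) < ε := by rw [hε]; norm_num
  set S := {t : ℕ × ℕ × ℕ | 0 < t.1 ∧ 0 < t.2.1 ∧ 0 < t.2.2 ∧
      Nat.gcd t.1 t.2.1 = 1 ∧ t.1 + t.2.1 = t.2.2 ∧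
      (rad (t.1 * t.2.1 * t.2.2) : ℝ) ^ (1 + ε) < (t.2.2 : ℝ)} with hSdef
  have hS : S.Finite := habc ε hεpos
  set f : ℕ → ℕ × ℕ × ℕ :=
    fun n => (n.factorial / k, 1, n.factorial / k + 1) with hf
  -- injectivity of f on Ici N
  have hinj : Set.InjOn f (Set.Ici N) := by
    intro a ha b hb hab
    have hka : k ∣ a.factorial := Nat.dvd_factorial hk (by simp [Set.mem_Ici] at ha; omega)
    have hkb : k ∣ b.factorial := Nat.dvd_factorial hk (by simp [Set.mem_Ici] at hb; omega)
    have h1 : a.factorial / k = b.factorial / k := congrArg Prod.fst hab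
    have h2 : a.factorial = b.factorial := by
      rw [← Nat.div_mul_cancel hka, ← Nat.div_mul_cancel hkb, h1]
    by_contra hne
    simp only [Set.mem_Ici] at ha hb
    rcases Nat.lt_or_ge a b with h | h
    · exact absurd h2 (Nat.ne_of_lt ((Nat.factorial_lt (by omega)).mpr h))
    · have hba : b < a := by omega
      exact absurd h2.symm (Nat.ne_of_lt ((Nat.factorial_lt (by omega)).mpr hba))
  -- main inclusion
  have hmain : {n : ℕ | Powerful (n.factorial + k)} ⊆
      Set.Iio N ∪ (Set.Ici N ∩ f ⁻¹' S) := by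
    intro n hn
    rcases Nat.lt_or_ge n N with h | h
    · exact Or.inl h
    refine Or.inr ⟨h, ?_⟩
    have hkn : k ≤ n := by omega
    have hkd : k ∣ n.factorial := Nat.dvd_factorial hk hkn
    set q := n.factorial / k with hq
    have hqk : q * k = n.factorial := Nat.div_mul_cancel hkd
    have hkfact : k ≤ n.factorial :=
      le_trans (Nat.self_le_factorial k) (Nat.factorial_le hkn)
    have hqpos : 0 < q := Nat.div_pos hkfact hk
    set m := n.factorial + k with hm
    have hm0 : m ≠ 0 := by positivity
    have hpow : Powerful m := hn
    -- divisibility / size facts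
    have hrad2 : rad m ^ 2 ≤ m := Nat.le_of_dvd (by positivity) (rad_sq_dvd_of_powerful hm0 hpow)
    have hqdvd : q ∣ n.factorial := ⟨k, hqk.symm⟩
    have hcdvd : (q + 1) ∣ m := ⟨k, by rw [hm, ← hqk]; ring⟩
    have hR : rad (q * (q + 1)) ∣ rad n.factorial * rad m :=
      (rad_mul_dvd q (q + 1)).trans
        (mul_dvd_mul (rad_dvd_rad_of_dvd n.factorial_ne_zero hqdvd)
          (rad_dvd_rad_of_dvd hm0 hcdvd))
    have hRle : rad (q * (q + 1)) ≤ 4 ^ n * rad m :=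
      le_trans (Nat.le_of_dvd (Nat.mul_pos (rad_pos _) (rad_pos _)) hR)
        (Nat.mul_le_mul_right _ (rad_factorial_le n))
    -- key growth bound
    have hkey : 4 * k ^ 3 * 256 ^ n < n.factorial := by
      have := hN0 n (by omega)
      simpa using this
    have hmle : m ≤ 2 * n.factorial := by omega
    -- the natural-number inequality
    have hnat : rad (q * (q + 1)) ^ 4 < (q + 1) ^ 3 := by
      have h256 : ((4 : ℕ) ^ n) ^ 4 = 256 ^ n := by
        rw [show (256 : ℕ) = 4 ^ 4 from rfl, ← pow_mul, ← pow_mul, Nat.mul_comm]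
      have h5 : rad m ^ 4 ≤ m ^ 2 := by
        calc rad m ^ 4 = (rad m ^ 2) ^ 2 := by ring
          _ ≤ m ^ 2 := Nat.pow_le_pow_left hrad2 2
      have hq3 : 4 * 256 ^ n * n.factorial ^ 2 ≤ q ^ 3 := by
        have h6 : (4 * k ^ 3 * 256 ^ n) * n.factorial ^ 2 ≤ n.factorial * n.factorial ^ 2 :=
          Nat.mul_le_mul_right _ hkey.le
        have h7 : n.factorial * n.factorial ^ 2 = q ^ 3 * k ^ 3 := by rw [← hqk]; ring
        have h8 : (4 * 256 ^ n * n.factorial ^ 2) * k ^ 3 ≤ q ^ 3 * k ^ 3 := by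
          calc (4 * 256 ^ n * n.factorial ^ 2) * k ^ 3
              = (4 * k ^ 3 * 256 ^ n) * n.factorial ^ 2 := by ring
            _ ≤ n.factorial * n.factorial ^ 2 := h6
            _ = q ^ 3 * k ^ 3 := h7
        exact Nat.le_of_mul_le_mul_right h8 (by positivity)
      calc rad (q * (q + 1)) ^ 4 ≤ (4 ^ n * rad m) ^ 4 := Nat.pow_le_pow_left hRle 4
        _ = 256 ^ n * rad m ^ 4 := by rw [mul_pow, h256]
        _ ≤ 256 ^ n * m ^ 2 := Nat.mul_le_mul_left _ h5
        _ ≤ 256 ^ n * (2 * n.factorial) ^ 2 :=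
            Nat.mul_le_mul_left _ (Nat.pow_le_pow_left hmle 2)
        _ = 4 * 256 ^ n * n.factorial ^ 2 := by ring
        _ ≤ q ^ 3 := hq3
        _ < (q + 1) ^ 3 := Nat.pow_lt_pow_left (Nat.lt_succ_self q) (by norm_num)
    -- convert to the real inequality
    have hgoal : (rad (q * 1 * (q + 1)) : ℝ) ^ (1 + ε) < ((q + 1 : ℕ) : ℝ) := by
      rw [mul_one, hε]
      set R := rad (q * (q + 1)) with hRdef
      have h4 : ((R : ℝ)) ^ (4 : ℕ) < ((q + 1 : ℕ) : ℝ) ^ (3 : ℕ) := by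
        exact_mod_cast hnat
      have hRnn : (0 : ℝ) ≤ (R : ℝ) := Nat.cast_nonneg R
      have e1 : (R : ℝ) ^ (1 + 1/3 : ℝ) = ((R : ℝ) ^ (4 : ℕ)) ^ (1/3 : ℝ) := by
        rw [← Real.rpow_natCast (R : ℝ) 4, ← Real.rpow_mul hRnn]
        norm_num
      have e2 : (((q + 1 : ℕ) : ℝ) ^ (3 : ℕ)) ^ (1/3 : ℝ) = ((q + 1 : ℕ) : ℝ) := by
        rw [← Real.rpow_natCast ((q + 1 : ℕ) : ℝ) 3, ← Real.rpow_mul (Nat.cast_nonneg _)]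
        norm_num
      rw [e1, ← e2]
      exact Real.rpow_lt_rpow (by positivity) h4 (by norm_num)
    simp only [hSdef, hf, Set.mem_preimage, Set.mem_setOf_eq]
    exact ⟨hqpos, Nat.one_pos, Nat.succ_pos q, Nat.gcd_one_right q, trivial, hgoal⟩
  apply Set.Finite.subset _ hmain
  apply (Set.finite_Iio N).union
  apply Set.Finite.of_finite_image (hS.subset ?_) (hinj.mono Set.inter_subset_left)
  rintro t ⟨n, ⟨-, ht⟩, rfl⟩
  exact ht
end

section
/- Assume the abc conjecture. Then for every fixed natural number k ≥ 0, there are only finitely many powerful positive integers x for which there exists a natural number n with |x − n!| ≤ k. -/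
lemma rad_dvd (n : ℕ) : rad n ∣ n := Nat.prod_primeFactors_dvd n

lemma rad_le_of_dvd {m n : ℕ} (hn : n ≠ 0) (h : m ∣ n) : rad m ≤ rad n :=
  Finset.prod_le_prod_of_subset_of_one_le' (Nat.primeFactors_mono h hn)
    (fun p hp _ => (Nat.prime_of_mem_primeFactors hp).one_lt.le)

lemma rad_mul_le {m n : ℕ} (hm : m ≠ 0) (hn : n ≠ 0) : rad (m * n) ≤ rad m * rad n := by
  unfold rad
  rw [Nat.primeFactors_mul hm hn, ← Finset.union_sdiff_self_eq_union,
    Finset.prod_union Finset.disjoint_sdiff]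
  refine Nat.mul_le_mul le_rfl ?_
  exact Finset.prod_le_prod_of_subset_of_one_le' (Finset.sdiff_subset)
    (fun p hp _ => (Nat.prime_of_mem_primeFactors hp).one_lt.le)

lemma rad_mul3_le {a b c : ℕ} (ha : a ≠ 0) (hb : b ≠ 0) (hc : c ≠ 0) :
    rad (a * b * c) ≤ rad a * rad b * rad c :=
  (rad_mul_le (Nat.mul_ne_zero ha hb) hc).trans
    (Nat.mul_le_mul (rad_mul_le ha hb) le_rfl)

lemma sq_rad_dvd_of_powerful {x : ℕ} (hpow : Powerful x) : rad x ^ 2 ∣ x := by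
  unfold rad
  rw [← Finset.prod_pow]
  have key : ∀ s : Finset ℕ, s ⊆ x.primeFactors → (∏ p ∈ s, p ^ 2) ∣ x := by
    intro s
    induction s using Finset.induction with
    | empty => intro _; simpa using one_dvd x
    | insert _ _ hns =>
      rename_i p s ih
      intro hsub
      rw [Finset.prod_insert hns]
      have hpmem := hsub (Finset.mem_insert_self p s)
      have hp := Nat.prime_of_mem_primeFactors hpmem
      have hps : ¬ p ∣ ∏ q ∈ s, q ^ 2 := by
        intro hdvd
        obtain ⟨q, hq, hpq⟩ := (Nat.Prime.prime hp).exists_mem_finset_dvd hdvd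
        have hqprime := Nat.prime_of_mem_primeFactors (hsub (Finset.mem_insert_of_mem hq))
        have : p = q := by
          have := (Nat.Prime.dvd_of_dvd_pow hp hpq)
          exact ((Nat.prime_dvd_prime_iff_eq hp hqprime).mp this)
        exact hns (this ▸ hq)
      have hco : Nat.Coprime (p ^ 2) (∏ q ∈ s, q ^ 2) :=
        Nat.Coprime.pow_left _ ((Nat.Prime.coprime_iff_not_dvd hp).mpr hps)
      exact Nat.Coprime.mul_dvd_of_dvd_of_dvd hco
        (hpow p hp (Nat.dvd_of_mem_primeFactors hpmem))
        (ih (fun q hq => hsub (Finset.mem_insert_of_mem hq)))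
  exact key _ (le_refl _)

lemma fact_mul_pow_le (a : ℕ) : ∀ d : ℕ, a.factorial * a ^ d ≤ (a + d).factorial := by
  intro d
  induction d with
  | zero => simp
  | succ d ih =>
    rw [pow_succ, ← mul_assoc]
    calc a.factorial * a ^ d * a ≤ (a + d).factorial * a := Nat.mul_le_mul_right _ ih
    _ ≤ (a + d).factorial * (a + d + 1) := Nat.mul_le_mul_left _ (by omega)
    _ = (a + (d+1)).factorial := by
      have : a + (d+1) = (a+d)+1 := by omega
      rw [this, Nat.factorial_succ]; ring


lemma growth (M : ℕ) : ∃ N : ℕ, ∀ n ≥ N, M * 4096 ^ n < n.factorial := by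
  set a := 4096 * (M + 2) with ha
  refine ⟨14 * a, fun n hn => ?_⟩
  have ha1 : 1 ≤ a := by omega
  have h1 : a ^ (n - a) ≤ n.factorial := by
    have := fact_mul_pow_le a (n - a)
    have hn' : a + (n - a) = n := by omega
    rw [hn'] at this
    calc a ^ (n - a) ≤ a.factorial * a ^ (n - a) :=
      Nat.le_mul_of_pos_left _ a.factorial_pos
    _ ≤ n.factorial := this
  have h2 : (4096 : ℕ) ^ (n - a) * (M + 2) ^ (n - a) ≤ a ^ (n - a) :=
    le_of_eq (by rw [ha, Nat.mul_pow])
  have h3 : (M + 2) * 2 ^ (12 * a) ≤ (M + 2) ^ (n - a) := by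
    calc (M + 2) * 2 ^ (12 * a) = (M + 2) ^ 1 * 2 ^ (12 * a) := by ring
    _ ≤ (M + 2) ^ 1 * (M + 2) ^ (12 * a) :=
        Nat.mul_le_mul_left _ (Nat.pow_le_pow_left (by omega) _)
    _ = (M + 2) ^ (1 + 12 * a) := by rw [pow_add]
    _ ≤ (M + 2) ^ (n - a) := Nat.pow_le_pow_right (by omega) (by clear_value a; omega)
  have h4 : (2:ℕ) ^ (12 * a) = 4096 ^ a := by
    rw [pow_mul]; norm_num
  have key : (M + 2) * 4096 ^ n ≤ n.factorial := by
    calc (M + 2) * 4096 ^ n = 4096 ^ (n - a) * ((M+2) * 4096 ^ a) := by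
          have hsplit : (4096:ℕ) ^ n = 4096 ^ (n - a) * 4096 ^ a := by
            rw [← pow_add, Nat.sub_add_cancel (by clear_value a; omega : a ≤ n)]
          rw [hsplit]; ring
    _ = 4096 ^ (n - a) * ((M+2) * 2 ^ (12 * a)) := by rw [h4]
    _ ≤ 4096 ^ (n - a) * (M + 2) ^ (n - a) := Nat.mul_le_mul_left _ h3
    _ ≤ a ^ (n - a) := h2
    _ ≤ n.factorial := h1
  have : M * 4096 ^ n < (M + 2) * 4096 ^ n := by
    have hp : 0 < (4096:ℕ) ^ n := Nat.pow_pos (n := n) (by norm_num)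
    exact Nat.mul_lt_mul_of_lt_of_le (by omega) le_rfl hp
  omega

lemma not_powerful_factorial {n : ℕ} (hn : 2 ≤ n)
    (hpow : ∀ p : ℕ, p.Prime → p ∣ n.factorial → p ^ 2 ∣ n.factorial) : False := by
  obtain ⟨p, hp, h1, h2⟩ := Nat.exists_prime_lt_and_le_two_mul (n / 2) (by omega)
  have hp2 : 2 ≤ p := hp.two_le
  have hpn : p ≤ n := by omega
  have h2p : n < 2 * p := by omega
  have hdvd : p ∣ n.factorial := Nat.dvd_factorial hp.pos hpn
  have hsq : p ^ 2 ∣ n.factorial := hpow p hp hdvd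
  have hlog : Nat.log p n < 2 := by
    have : n < p ^ 2 := by nlinarith
    exact Nat.log_lt_of_lt_pow (by omega) this
  rw [Nat.Prime.pow_dvd_factorial_iff hp hlog] at hsq
  have hsum : ∑ i ∈ Finset.Ico 1 2, n / p ^ i = n / p := by
    simp
  rw [hsum] at hsq
  have : n / p = 1 := by
    have h1 : 1 ≤ n / p := Nat.one_le_div_iff (by omega) |>.mpr hpn
    have h2 : n / p < 2 := Nat.div_lt_of_lt_mul (by omega)
    omega
  omega

lemma triple_of_sum (u v : ℕ) (hu : 0 < u) (hv : 0 < v) :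
    ∃ a b c d : ℕ, 0 < a ∧ 0 < b ∧ 0 < c ∧ Nat.gcd a b = 1 ∧ a + b = c ∧
      c * d = u + v ∧ d ∣ v ∧ 0 < d ∧ a * b * c ∣ u * v * (u + v) := by
  set d := Nat.gcd u v with hd
  have hd0 : 0 < d := Nat.gcd_pos_of_pos_left _ hu
  have hdu : d ∣ u := Nat.gcd_dvd_left u v
  have hdv : d ∣ v := Nat.gcd_dvd_right u v
  have hdw : d ∣ (u + v) := dvd_add hdu hdv
  refine ⟨u / d, v / d, (u + v) / d, d, ?_, ?_, ?_, ?_, ?_, ?_, hdv, hd0, ?_⟩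
  · exact Nat.div_pos (Nat.le_of_dvd hu hdu) hd0
  · exact Nat.div_pos (Nat.le_of_dvd hv hdv) hd0
  · exact Nat.div_pos (Nat.le_of_dvd (by omega) hdw) hd0
  · exact Nat.coprime_div_gcd_div_gcd hd0
  · rw [Nat.add_div_of_dvd_right hdu]
  · exact Nat.div_mul_cancel hdw
  · exact mul_dvd_mul (mul_dvd_mul ⟨d, (Nat.div_mul_cancel hdu).symm⟩
      ⟨d, (Nat.div_mul_cancel hdv).symm⟩) ⟨d, (Nat.div_mul_cancel hdw).symm⟩

lemma rad_cube_lt {k n x m a b c : ℕ} (hx : 0 < x) (hpow : Powerful x)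
    (hm : 0 < m) (hmk : m ≤ k) (hkn : k ≤ n)
    (hG : 8 * (k + 1) ^ 10 * 4096 ^ n < n.factorial)
    (hxle : x ≤ n.factorial + k)
    (hdvd : a * b * c ∣ x * m * n.factorial)
    (ha : 0 < a) (hb : 0 < b) (hc : 0 < c)
    (hcd : n.factorial ≤ k * c) :
    rad (a * b * c) ^ 3 < c ^ 2 := by
  have hk1 : 1 ≤ k := hm.trans_le hmk
  have hnf : n ≤ n.factorial := Nat.self_le_factorial n
  have hfpos : 0 < n.factorial := Nat.factorial_pos n
  set r := rad x with hr
  set R := rad (a * b * c) with hR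
  -- step 1 : R ≤ r * k * 4 ^ n
  have h1 : R ≤ r * k * 4 ^ n := by
    have e1 : R ≤ rad (x * m * n.factorial) :=
      rad_le_of_dvd (by positivity) hdvd
    have e2 : rad (x * m * n.factorial) ≤ r * rad m * rad n.factorial :=
      rad_mul3_le (by omega) (by omega) (by omega)
    have e3 : rad m ≤ k := (Nat.le_of_dvd hm (rad_dvd m)).trans hmk
    calc R ≤ r * rad m * rad n.factorial := e1.trans e2
      _ ≤ r * k * 4 ^ n :=
        Nat.mul_le_mul (Nat.mul_le_mul le_rfl e3) (rad_factorial_le n)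
  -- step 2 : r ^ 2 ≤ 2 * n.factorial
  have h2 : r ^ 2 ≤ 2 * n.factorial := by
    have : r ^ 2 ≤ x := Nat.le_of_dvd hx (sq_rad_dvd_of_powerful hpow)
    omega
  -- step 3 : R ^ 6 * k ^ 4 < c ^ 4 * k ^ 4
  have h3 : R ^ 6 * k ^ 4 < c ^ 4 * k ^ 4 := by
    have e1 : R ^ 6 ≤ (r * k * 4 ^ n) ^ 6 := Nat.pow_le_pow_left h1 6
    have e2 : (r * k * 4 ^ n) ^ 6 = (r ^ 2) ^ 3 * k ^ 6 * 4096 ^ n := by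
      rw [mul_pow, mul_pow,
        show ((4:ℕ) ^ n) ^ 6 = 4096 ^ n by rw [← pow_mul, mul_comm, pow_mul]; norm_num]
      ring
    have e3 : (r ^ 2) ^ 3 ≤ (2 * n.factorial) ^ 3 := Nat.pow_le_pow_left h2 3
    have e4 : R ^ 6 * k ^ 4 ≤ (2 * n.factorial) ^ 3 * k ^ 6 * 4096 ^ n * k ^ 4 := by
      calc R ^ 6 * k ^ 4 ≤ ((r ^ 2) ^ 3 * k ^ 6 * 4096 ^ n) * k ^ 4 := by
            rw [← e2]; exact Nat.mul_le_mul_right _ e1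
        _ ≤ (2 * n.factorial) ^ 3 * k ^ 6 * 4096 ^ n * k ^ 4 := by
            exact Nat.mul_le_mul_right _ (Nat.mul_le_mul_right _ (Nat.mul_le_mul_right _ e3))
    have e5 : (2 * n.factorial) ^ 3 * k ^ 6 * 4096 ^ n * k ^ 4
        = (8 * k ^ 10 * 4096 ^ n) * n.factorial ^ 3 := by ring
    have e6 : 8 * k ^ 10 * 4096 ^ n < n.factorial := by
      have : k ^ 10 ≤ (k + 1) ^ 10 := Nat.pow_le_pow_left (by omega) 10
      have h46 : (0:ℕ) < 4096 ^ n := Nat.pow_pos (n := n) (by norm_num)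
      nlinarith [hG]
    have e7 : (8 * k ^ 10 * 4096 ^ n) * n.factorial ^ 3 < n.factorial * n.factorial ^ 3 :=
      Nat.mul_lt_mul_of_lt_of_le e6 le_rfl (by positivity)
    have e8 : n.factorial * n.factorial ^ 3 = n.factorial ^ 4 := by ring
    have e9 : n.factorial ^ 4 ≤ (k * c) ^ 4 := Nat.pow_le_pow_left hcd 4
    have e10 : (k * c) ^ 4 = c ^ 4 * k ^ 4 := by ring
    omega
  have h4 : R ^ 6 < c ^ 4 := by
    have hk4 : 0 < k ^ 4 := by positivity
    exact Nat.lt_of_mul_lt_mul_right h3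
  have h5 : (R ^ 3) ^ 2 < (c ^ 2) ^ 2 := by
    have : (R ^ 3) ^ 2 = R ^ 6 := by ring
    have h2' : (c ^ 2) ^ 2 = c ^ 4 := by ring
    omega
  exact lt_of_pow_lt_pow_left₀ 2 (Nat.zero_le _) h5

theorem powerful_near_factorial_finite (habc : ABCConjecture) (k : ℕ) :
    {x : ℕ | 0 < x ∧ Powerful x ∧ ∃ n : ℕ, |(x : ℤ) - (n.factorial : ℤ)| ≤ (k : ℤ)}.Finite := by
  have hF := habc (1/2) (by norm_num)
  obtain ⟨C, hC⟩ : ∃ C : ℕ, ∀ a b c : ℕ, 0 < a → 0 < b → 0 < c →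
      Nat.gcd a b = 1 → a + b = c →
      (rad (a * b * c) : ℝ) ^ (1 + (1:ℝ)/2) < (c : ℝ) → c ≤ C := by
    obtain ⟨C, hC⟩ := (hF.image (fun t => t.2.2)).bddAbove
    refine ⟨C, fun a b c h1 h2 h3 h4 h5 h6 => hC ⟨(a, b, c), ?_, rfl⟩⟩
    exact ⟨h1, h2, h3, h4, h5, h6⟩
  obtain ⟨N₀, hN₀⟩ := growth (8 * (k + 1) ^ 10)
  set N₁ := N₀ + k + k * C + 2 with hN₁
  have key : ∀ n x : ℕ, 0 < x → Powerful x →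
      |(x : ℤ) - (n.factorial : ℤ)| ≤ (k : ℤ) → n ≤ N₁ := by
    intro n x hx hpow hnear
    by_contra hcon
    push_neg at hcon
    have hn2 : 2 ≤ n := by omega
    have hnN₀ : N₀ ≤ n := by omega
    have hkn : k ≤ n := by omega
    have hnf : n ≤ n.factorial := Nat.self_le_factorial n
    have hG : 8 * (k + 1) ^ 10 * 4096 ^ n < n.factorial := hN₀ n hnN₀
    have hkC : k * C < n := by omega
    rw [abs_le] at hnear
    obtain ⟨hnear1, hnear2⟩ := hnear
    -- the triple construction, uniform over the two cases
    have main : ∀ u v : ℕ, 0 < u → 0 < v → v ≤ k → n.factorial ≤ u + v →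
        u * v * (u + v) = x * v * n.factorial → u + v ≤ n.factorial + k → False := by
      intro u v hu hv hvk hfge hprod hle
      obtain ⟨a, b, c, d, ha, hb, hc, hab, habc', hcd, hdv, hd0, hdvd⟩ :=
        triple_of_sum u v hu hv
      have hdk : d ≤ k := (Nat.le_of_dvd hv hdv).trans hvk
      have hfac : n.factorial ≤ k * c := by
        have h2 : c * d ≤ c * k := Nat.mul_le_mul_left c hdk
        calc n.factorial ≤ c * d := by omega
          _ ≤ c * k := h2
          _ = k * c := Nat.mul_comm c k
      have hdvd' : a * b * c ∣ x * v * n.factorial := hprod ▸ hdvd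
      have hcube : rad (a * b * c) ^ 3 < c ^ 2 :=
        rad_cube_lt hx hpow hv hvk hkn hG (by omega) hdvd' ha hb hc hfac
      -- real inequality
      set R := rad (a * b * c) with hRdef
      have hcast : ((R : ℝ)) ^ (3 : ℕ) < ((c : ℝ)) ^ (2 : ℕ) := by
        exact_mod_cast hcube
      have hsq : ((R : ℝ) ^ (1 + (1:ℝ)/2)) ^ (2 : ℕ) = (R : ℝ) ^ (3 : ℕ) := by
        rw [← Real.rpow_natCast ((R : ℝ) ^ (1 + (1:ℝ)/2)) 2,
          ← Real.rpow_mul (Nat.cast_nonneg R),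
          show ((1:ℝ) + 1/2) * (2:ℕ) = ((3:ℕ) : ℝ) by norm_num,
          Real.rpow_natCast]
      have hreal : (R : ℝ) ^ (1 + (1:ℝ)/2) < (c : ℝ) := by
        refine lt_of_pow_lt_pow_left₀ 2 (Nat.cast_nonneg c) ?_
        rw [hsq]
        exact hcast
      have hcC : c ≤ C := hC a b c ha hb hc hab habc' hreal
      have : n.factorial ≤ k * C := hfac.trans (Nat.mul_le_mul_left k hcC)
      omega
    rcases Nat.lt_trichotomy x n.factorial with hlt | heq | hgt
    · -- x + m = n!
      set m := n.factorial - x with hmdef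
      have hm : 0 < m := by omega
      have hmk : m ≤ k := by omega
      exact main x m hx hm hmk (by omega) (by rw [show x + m = n.factorial by omega])
        (by omega)
    · exact not_powerful_factorial hn2 (heq ▸ hpow)
    · -- x = n! + m
      set m := x - n.factorial with hmdef
      have hm : 0 < m := by omega
      have hmk : m ≤ k := by omega
      have hx' : n.factorial + m = x := by omega
      refine main n.factorial m (Nat.factorial_pos n) hm hmk (by omega) ?_ (by omega)
      rw [hx']; ring
  refine (Set.finite_Iic (N₁.factorial + k)).subset ?_
  rintro x ⟨hx, hpow, n, hnear⟩
  have hn : n ≤ N₁ := key n x hx hpow hnear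
  have h1 : n.factorial ≤ N₁.factorial := Nat.factorial_le hn
  rw [abs_le] at hnear
  simp only [Set.mem_Iic]
  omega
end

section
/- Assume the abc conjecture. Let a and d be positive integers with gcd(a,d) = 1, and consider the arithmetic progression a_n = a + n·d. Then there are only finitely many natural numbers n such that a_n, a_{n+1}, and a_{n+2} are all powerful numbers. -/
lemma rad_mul_dvd_s6 {m n : ℕ} (hm : m ≠ 0) (hn : n ≠ 0) :
    rad (m * n) ∣ rad m * rad n := by
  unfold rad
  rw [Nat.primeFactors_mul hm hn, ← Finset.union_sdiff_self_eq_union,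
    Finset.prod_union Finset.disjoint_sdiff]
  exact mul_dvd_mul dvd_rfl (Finset.prod_dvd_prod_of_subset _ _ _ Finset.sdiff_subset)

lemma prod_sq_dvd {s : Finset ℕ} {n : ℕ} (hp : ∀ p ∈ s, p.Prime)
    (hdvd : ∀ p ∈ s, p ^ 2 ∣ n) : (∏ p ∈ s, p) ^ 2 ∣ n := by
  induction s using Finset.induction_on with
  | empty => simp
  | @insert q s hq ih =>
    rw [Finset.prod_insert hq, mul_pow]
    have hcop : Nat.Coprime (q ^ 2) ((∏ p ∈ s, p) ^ 2) := by
      apply Nat.Coprime.pow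
      apply Nat.Coprime.prod_right
      intro p hp'
      exact (Nat.coprime_primes (hp q (Finset.mem_insert_self q s))
        (hp p (Finset.mem_insert_of_mem hp'))).2 (fun h => hq (h ▸ hp'))
    exact hcop.mul_dvd_of_dvd_of_dvd (hdvd q (Finset.mem_insert_self q s))
      (ih (fun p h => hp p (Finset.mem_insert_of_mem h))
          (fun p h => hdvd p (Finset.mem_insert_of_mem h)))

lemma powerful_rad_sq {n : ℕ} (h : Powerful n) : rad n ^ 2 ∣ n := by
  apply prod_sq_dvd (fun p hp => Nat.prime_of_mem_primeFactors hp)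
  intro p hp
  exact h p (Nat.prime_of_mem_primeFactors hp) (Nat.dvd_of_mem_primeFactors hp)

theorem powerful_triples_in_AP_finite (habc : ABCConjecture) (a d : ℕ)
    (ha : 0 < a) (hd : 0 < d) (hcop : Nat.gcd a d = 1) :
    {n : ℕ | Powerful (a + n * d) ∧ Powerful (a + (n + 1) * d) ∧
      Powerful (a + (n + 2) * d)}.Finite := by
  have hS := habc (1/4) (by norm_num)
  set S := {t : ℕ × ℕ × ℕ | 0 < t.1 ∧ 0 < t.2.1 ∧ 0 < t.2.2 ∧
      Nat.gcd t.1 t.2.1 = 1 ∧ t.1 + t.2.1 = t.2.2 ∧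
      (rad (t.1 * t.2.1 * t.2.2) : ℝ) ^ (1 + 1/4 : ℝ) < (t.2.2 : ℝ)} with hSdef
  set f : ℕ → ℕ × ℕ × ℕ := fun n =>
    ((a + n * d) * (a + (n + 2) * d), d ^ 2, (a + (n + 1) * d) ^ 2) with hfdef
  have hfinj : Function.Injective f := by
    intro m n h
    have h3 : (a + (m + 1) * d) ^ 2 = (a + (n + 1) * d) ^ 2 := congrArg (Prod.snd ∘ Prod.snd) h
    have h4 : a + (m + 1) * d = a + (n + 1) * d := Nat.pow_left_injective two_ne_zero h3
    have h5 : (m + 1) * d = (n + 1) * d := Nat.add_left_cancel h4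
    have := Nat.eq_of_mul_eq_mul_right hd h5
    omega
  apply Set.Finite.subset ((Set.finite_Iic (32 * d ^ 10)).union (hS.preimage hfinj.injOn))
  rintro n ⟨hx, hy, hz⟩
  by_cases hn : n ≤ 32 * d ^ 10
  · exact Or.inl hn
  right
  push_neg at hn
  set x := a + n * d with hxd
  set y := a + (n + 1) * d with hyd
  set z := a + (n + 2) * d with hzd
  have hx0 : 0 < x := Nat.lt_of_lt_of_le ha (Nat.le_add_right _ _)
  have hy0 : 0 < y := Nat.lt_of_lt_of_le ha (Nat.le_add_right _ _)
  have hz0 : 0 < z := Nat.lt_of_lt_of_le ha (Nat.le_add_right _ _)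
  have hylarge : 32 * d ^ 10 < y := by
    calc 32 * d ^ 10 < n := hn
    _ ≤ (n + 1) * d := Nat.le_trans (Nat.le_succ n) (Nat.le_mul_of_pos_right _ hd)
    _ ≤ y := Nat.le_add_left _ _
  -- coprimality
  have hxcop : Nat.Coprime x d := (Nat.coprime_add_mul_right_left a d n).2 hcop
  have hzcop : Nat.Coprime z d := (Nat.coprime_add_mul_right_left a d (n + 2)).2 hcop
  have hcop2 : Nat.Coprime (x * z) (d ^ 2) := (hxcop.mul hzcop).pow_right 2
  -- sum identity
  have hsum : x * z + d ^ 2 = y ^ 2 := by rw [hxd, hyd, hzd]; ring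
  -- radical bounds
  set N := x * z * d ^ 2 * y ^ 2 with hNd
  have hN0 : 0 < N := by positivity
  have hrad1 : rad N ∣ rad x * rad z * rad d * rad y := by
    have e1 : rad (d ^ 2) = rad d := by
      unfold rad; rw [Nat.primeFactors_pow d two_ne_zero]
    have e2 : rad (y ^ 2) = rad y := by
      unfold rad; rw [Nat.primeFactors_pow y two_ne_zero]
    calc rad N ∣ rad (x * z * d ^ 2) * rad (y ^ 2) :=
          rad_mul_dvd_s6 (by positivity) (by positivity)
    _ ∣ (rad (x * z) * rad (d ^ 2)) * rad (y ^ 2) :=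
          mul_dvd_mul_right (rad_mul_dvd_s6 (by positivity) (by positivity)) _
    _ ∣ (rad x * rad z * rad (d ^ 2)) * rad (y ^ 2) :=
          mul_dvd_mul_right (mul_dvd_mul_right (rad_mul_dvd_s6 hx0.ne' hz0.ne') _) _
    _ = rad x * rad z * rad d * rad y := by rw [e1, e2]
  have hrx : rad x ^ 2 ≤ x := Nat.le_of_dvd hx0 (powerful_rad_sq hx)
  have hry : rad y ^ 2 ≤ y := Nat.le_of_dvd hy0 (powerful_rad_sq hy)
  have hrz : rad z ^ 2 ≤ z := Nat.le_of_dvd hz0 (powerful_rad_sq hz)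
  have hrd : rad d ≤ d := Nat.le_of_dvd hd (rad_dvd d)
  have hxy : x ≤ y := by
    rw [hxd, hyd]; exact Nat.add_le_add_left (Nat.mul_le_mul_right d (Nat.le_succ n)) a
  have hzy : z ≤ 2 * y := by
    rw [hzd, hyd]
    nlinarith [Nat.mul_le_mul_right d (show n + 2 ≤ 2 * (n + 1) by omega)]
  have hRpos : 0 < rad x * rad z * rad d * rad y := by
    have : ∀ m : ℕ, 0 < m → 0 < rad m := fun m hm =>
      Nat.pos_of_ne_zero (fun h => by
        have := rad_dvd m
        rw [h] at this
        simp at this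
        omega)
    exact Nat.mul_pos (Nat.mul_pos (Nat.mul_pos (this x hx0) (this z hz0)) (this d hd)) (this y hy0)
  have hradN : rad N ≤ rad x * rad z * rad d * rad y := Nat.le_of_dvd hRpos hrad1
  have hsq : rad N ^ 2 ≤ 2 * d ^ 2 * y ^ 3 := by
    calc rad N ^ 2 ≤ (rad x * rad z * rad d * rad y) ^ 2 := Nat.pow_le_pow_left hradN 2
    _ = rad x ^ 2 * rad z ^ 2 * rad d ^ 2 * rad y ^ 2 := by ring
    _ ≤ x * z * d ^ 2 * y := by gcongr
    _ ≤ y * (2 * y) * d ^ 2 * y := by gcongr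
    _ = 2 * d ^ 2 * y ^ 3 := by ring
  have hkey : rad N ^ 5 < y ^ 8 := by
    have h10 : rad N ^ 10 < y ^ 16 := by
      calc rad N ^ 10 = (rad N ^ 2) ^ 5 := by ring
      _ ≤ (2 * d ^ 2 * y ^ 3) ^ 5 := Nat.pow_le_pow_left hsq 5
      _ = 32 * d ^ 10 * y ^ 15 := by ring
      _ < y * y ^ 15 := by
          exact (Nat.mul_lt_mul_right (by positivity)).2 hylarge
      _ = y ^ 16 := by ring
    have : (rad N ^ 5) ^ 2 < (y ^ 8) ^ 2 := by
      calc (rad N ^ 5) ^ 2 = rad N ^ 10 := by ring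
      _ < y ^ 16 := h10
      _ = (y ^ 8) ^ 2 := by ring
    exact lt_of_pow_lt_pow_left₀ 2 (Nat.zero_le _) this
  -- real inequality
  have hreal : (rad N : ℝ) ^ (1 + 1/4 : ℝ) < ((y ^ 2 : ℕ) : ℝ) := by
    have hr0 : (0 : ℝ) ≤ (rad N : ℝ) := Nat.cast_nonneg _
    have hy0' : (0 : ℝ) < (y : ℝ) := by exact_mod_cast hy0
    have h5 : ((rad N : ℝ)) ^ (5 : ℕ) < ((y : ℝ)) ^ (8 : ℕ) := by exact_mod_cast hkey
    have e1 : (rad N : ℝ) ^ (1 + 1/4 : ℝ) = ((rad N : ℝ) ^ (5 : ℕ)) ^ ((1:ℝ)/4) := by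
      rw [← Real.rpow_natCast (rad N : ℝ) 5, ← Real.rpow_mul hr0]
      norm_num
    have e2 : ((y : ℝ)) ^ (2 : ℕ) = (((y : ℝ)) ^ (8 : ℕ)) ^ ((1:ℝ)/4) := by
      rw [← Real.rpow_natCast (y : ℝ) 8, ← Real.rpow_mul hy0'.le]
      norm_num
    push_cast
    rw [e1]
    calc ((rad N : ℝ) ^ (5 : ℕ)) ^ ((1:ℝ)/4) < (((y : ℝ)) ^ (8 : ℕ)) ^ ((1:ℝ)/4) :=
          Real.rpow_lt_rpow (by positivity) h5 (by norm_num)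
    _ = (y : ℝ) ^ (2 : ℕ) := e2.symm
  -- assemble membership
  show f n ∈ S
  refine ⟨by positivity, by positivity, by positivity, hcop2, hsum, ?_⟩
  simpa [hfdef, hNd, ← hxd, ← hyd, ← hzd] using hreal
end

section
/- Assume the abc conjecture. Then there exists a natural number N such that for all n ≥ N, the equation x^n + y^n = z^n has no solutions in positive integers x, y, z with gcd(x,y) = 1. -/
theorem fermat_large_exponents (habc : ABCConjecture) :
    ∃ N : ℕ, ∀ n : ℕ, N ≤ n →
      ¬ ∃ x y z : ℕ, 0 < x ∧ 0 < y ∧ 0 < z ∧ Nat.gcd x y = 1 ∧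
        x ^ n + y ^ n = z ^ n := by
  have hS := habc 1 one_pos
  obtain ⟨M, hM⟩ := ((hS.image (fun t => t.2.2)).bddAbove)
  refine ⟨max 7 (M + 1), fun n hn ⟨x, y, z, hx, hy, hz, hxy, heq⟩ => ?_⟩
  have h7 : 7 ≤ n := le_trans (le_max_left _ _) hn
  have hnM : M + 1 ≤ n := le_trans (le_max_right _ _) hn
  have hn0 : n ≠ 0 := by omega
  have hz2 : 2 ≤ z := by
    rcases Nat.lt_or_ge z 2 with h | h
    · interval_cases z
      have hx1 : 1 ≤ x ^ n := Nat.one_le_pow _ _ hx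
      have hy1 : 1 ≤ y ^ n := Nat.one_le_pow _ _ hy
      simp only [one_pow] at heq
      omega
    · exact h
  have hxz : x ≤ z := by
    have : x ^ n ≤ z ^ n := by
      have : 1 ≤ y ^ n := Nat.one_le_pow _ _ hy
      omega
    exact (Nat.pow_le_pow_iff_left hn0).mp this
  have hyz : y ≤ z := by
    have : y ^ n ≤ z ^ n := by
      have : 1 ≤ x ^ n := Nat.one_le_pow _ _ hx
      omega
    exact (Nat.pow_le_pow_iff_left hn0).mp this
  -- rad of the product of powers equals rad of the product
  have hradeq : rad (x ^ n * y ^ n * z ^ n) = rad (x * y * z) := by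
    unfold rad
    congr 1
    rw [Nat.primeFactors_mul (by positivity) (by positivity),
      Nat.primeFactors_mul (by positivity) (by positivity),
      Nat.primeFactors_mul (by positivity) (by positivity),
      Nat.primeFactors_mul (by positivity) (by positivity),
      Nat.primeFactors_pow _ hn0, Nat.primeFactors_pow _ hn0,
      Nat.primeFactors_pow _ hn0]
  have hraddvd : rad (x * y * z) ∣ x * y * z := Nat.prod_primeFactors_dvd _
  have hradle : rad (x ^ n * y ^ n * z ^ n) ≤ z ^ 3 := by
    rw [hradeq]
    calc rad (x * y * z) ≤ x * y * z := Nat.le_of_dvd (by positivity) hraddvd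
      _ ≤ z * z * z := by
          exact Nat.mul_le_mul (Nat.mul_le_mul hxz hyz) le_rfl
      _ = z ^ 3 := by ring
  have hkey : rad (x ^ n * y ^ n * z ^ n) ^ 2 < z ^ n := by
    calc rad (x ^ n * y ^ n * z ^ n) ^ 2 ≤ (z ^ 3) ^ 2 :=
          Nat.pow_le_pow_left hradle 2
      _ = z ^ 6 := by ring
      _ < z ^ 7 := Nat.pow_lt_pow_right hz2 (by omega)
      _ ≤ z ^ n := Nat.pow_le_pow_right (by omega) h7
  have hmem : (x ^ n, y ^ n, z ^ n) ∈
      {t : ℕ × ℕ × ℕ | 0 < t.1 ∧ 0 < t.2.1 ∧ 0 < t.2.2 ∧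
        Nat.gcd t.1 t.2.1 = 1 ∧ t.1 + t.2.1 = t.2.2 ∧
        (rad (t.1 * t.2.1 * t.2.2) : ℝ) ^ (1 + 1 : ℝ) < (t.2.2 : ℝ)} := by
    refine ⟨pow_pos hx n, pow_pos hy n,
      pow_pos hz n, Nat.Coprime.pow n n hxy, heq, ?_⟩
    have h2 : (1 + 1 : ℝ) = ((2 : ℕ) : ℝ) := by norm_num
    rw [h2, Real.rpow_natCast]
    exact_mod_cast hkey
  have hle : z ^ n ≤ M := hM ⟨_, hmem, rfl⟩
  have h2n : n < 2 ^ n := Nat.lt_two_pow_self (n := n)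
  have : 2 ^ n ≤ z ^ n := Nat.pow_le_pow_left hz2 n
  omega
end

section
/- Assume the abc conjecture. Then there are only finitely many triples (x, y, z) of positive integers with gcd(x,y) = 1, x + y = z, and x, y, z all 4-powerful. -/
/-- A natural number is k-powerful if every prime dividing it does so at least to the k-th power. -/
def KPowerful (k n : ℕ) : Prop := ∀ p : ℕ, p.Prime → p ∣ n → p ^ k ∣ n

lemma prod_pow_dvd (n : ℕ) (s : Finset ℕ) (hs : ∀ p ∈ s, p.Prime)
    (hd : ∀ p ∈ s, p ^ 4 ∣ n) : (∏ p ∈ s, p) ^ 4 ∣ n := by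
  classical
  induction s using Finset.induction_on with
  | empty => simp
  | @insert p s hp ih =>
    rw [Finset.prod_insert hp, mul_pow]
    have hpprime := hs p (Finset.mem_insert_self p s)
    have hcop : Nat.Coprime (p ^ 4) ((∏ q ∈ s, q) ^ 4) := by
      apply Nat.Coprime.pow
      apply Nat.Coprime.prod_right
      intro q hq
      exact (Nat.coprime_primes hpprime (hs q (Finset.mem_insert_of_mem hq))).2
        (fun h => hp (h ▸ hq))
    exact hcop.mul_dvd_of_dvd_of_dvd (hd p (Finset.mem_insert_self p s))
      (ih (fun q hq => hs q (Finset.mem_insert_of_mem hq))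
        (fun q hq => hd q (Finset.mem_insert_of_mem hq)))

lemma rad_pow_dvd {n : ℕ} (h : KPowerful 4 n) : rad n ^ 4 ∣ n :=
  prod_pow_dvd n n.primeFactors (fun _ hp => Nat.prime_of_mem_primeFactors hp)
    (fun p hp => h p (Nat.prime_of_mem_primeFactors hp) (Nat.dvd_of_mem_primeFactors hp))

theorem four_powerful_sum_finite (habc : ABCConjecture) :
    {t : ℕ × ℕ × ℕ | 0 < t.1 ∧ 0 < t.2.1 ∧ 0 < t.2.2 ∧
      Nat.gcd t.1 t.2.1 = 1 ∧ t.1 + t.2.1 = t.2.2 ∧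
      KPowerful 4 t.1 ∧ KPowerful 4 t.2.1 ∧ KPowerful 4 t.2.2}.Finite := by
  apply (habc (1/4) (by norm_num)).subset
  rintro ⟨a, b, c⟩ ⟨ha, hb, hc, hg, hs, h4a, h4b, h4c⟩
  refine ⟨ha, hb, hc, hg, hs, ?_⟩
  have ha' : 0 < a := ha
  have hb' : 0 < b := hb
  have hs' : a + b = c := hs
  have h4 : KPowerful 4 (a * b * c) := by
    intro p hp hd
    rcases (Nat.Prime.dvd_mul hp).mp hd with h | h
    · rcases (Nat.Prime.dvd_mul hp).mp h with h' | h'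
      · exact dvd_mul_of_dvd_left (dvd_mul_of_dvd_left (h4a p hp h') b) c
      · exact dvd_mul_of_dvd_left (dvd_mul_of_dvd_right (h4b p hp h') a) c
    · exact dvd_mul_of_dvd_right (h4c p hp h) _
  have hdvd : rad (a * b * c) ^ 4 ∣ a * b * c := rad_pow_dvd h4
  set r := rad (a * b * c) with hr
  have hle : r ^ 4 ≤ c ^ 3 := by
    refine le_trans (Nat.le_of_dvd (by positivity) hdvd) ?_
    have hac : a ≤ c := by omega
    have hbc : b ≤ c := by omega
    calc a * b * c ≤ c * c * c := by
          exact Nat.mul_le_mul (Nat.mul_le_mul hac hbc) le_rfl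
      _ = c ^ 3 := by ring
  have hc2 : 2 ≤ c := by omega
  have hlt : r ^ 20 < c ^ 16 := by
    calc r ^ 20 = (r ^ 4) ^ 5 := by ring
      _ ≤ (c ^ 3) ^ 5 := Nat.pow_le_pow_left hle 5
      _ = c ^ 15 := by ring
      _ < c ^ 16 := Nat.pow_lt_pow_right hc2 (by norm_num)
  have hltR : ((r : ℝ)) ^ (20 : ℕ) < ((c : ℝ)) ^ (16 : ℕ) := by exact_mod_cast hlt
  have e1 : (r : ℝ) ^ (1 + 1/4 : ℝ) = ((r : ℝ) ^ (20 : ℕ)) ^ ((1 : ℝ)/16) := by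
    rw [← Real.rpow_natCast (r : ℝ) 20, ← Real.rpow_mul (Nat.cast_nonneg r)]
    norm_num
  have e2 : (c : ℝ) = ((c : ℝ) ^ (16 : ℕ)) ^ ((1 : ℝ)/16) := by
    rw [← Real.rpow_natCast (c : ℝ) 16, ← Real.rpow_mul (Nat.cast_nonneg c)]
    norm_num
  rw [e1, e2]
  exact Real.rpow_lt_rpow (by positivity) hltR (by norm_num)
end
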